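/- Let γ1 > 0, γ2 > 0, and let 0 < a < b be constants such that the GEN-ISTA iterate Ω^{(k)} and the minimizer Ω* both satisfy aI ⪯ · ⪯ bI. If 0 < t ≤ a²/(2a²γ2 + 1), then ‖Ω^{(k+1)} − Ω*‖_F ≤ max(|m_t − t/a²|, |m_t − t/b²|)·‖Ω^{(k)} − Ω*‖_F, where m_t = 1 − 2tγ2. -/

import Mathlib

open Matrix BigOperators Kronecker

/-- Frobenius norm of a real matrix. -/
noncomputable def frobNorm {n : Type*} [Fintype n] (A : Matrix n n ℝ) : ℝ :=
  Real.sqrt (∑ i, ∑ j, (A i j)^2)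

/-- Entrywise L1 norm of a real matrix. -/
noncomputable def l1Norm {n : Type*} [Fintype n] (A : Matrix n n ℝ) : ℝ :=
  ∑ i, ∑ j, |A i j|

/-- Spectral (ℓ2 operator) norm of a real matrix. -/
noncomputable def specNorm {n : Type*} [Fintype n] [DecidableEq n] (A : Matrix n n ℝ) : ℝ :=
  ‖Matrix.toEuclideanCLM (𝕜 := ℝ) A‖

/-- Largest eigenvalue ρ₁(A) of a symmetric real matrix (junk value 0 otherwise). -/
noncomputable def maxEig {n : Type*} [Fintype n] [DecidableEq n] (A : Matrix n n ℝ) : ℝ :=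
  if h : A.IsHermitian then ⨆ i, h.eigenvalues i else 0

/-- Smallest eigenvalue ρ_p(A) of a symmetric real matrix (junk value 0 otherwise). -/
noncomputable def minEig {n : Type*} [Fintype n] [DecidableEq n] (A : Matrix n n ℝ) : ℝ :=
  if h : A.IsHermitian then ⨅ i, h.eigenvalues i else 0

/-- Loewner order: A ⪯ B iff B - A is positive semidefinite. -/
def loewnerLE {n : Type*} [Fintype n] (A B : Matrix n n ℝ) : Prop := (B - A).PosSemidef

/-- Entrywise soft-thresholding operator. -/
noncomputable def Sft {n : Type*} (A : Matrix n n ℝ) (τ : ℝ) : Matrix n n ℝ :=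
  Matrix.of fun i j => Real.sign (A i j) * max (|A i j| - τ) 0

/-- The elastic-net penalized Gaussian likelihood objective
  F(Ω) = tr(S̃Ω) − log det Ω + γ1‖Ω‖₁ + γ2‖Ω‖_F². -/
noncomputable def genObj {n : Type*} [Fintype n] [DecidableEq n]
    (S : Matrix n n ℝ) (γ1 γ2 : ℝ) (Ω : Matrix n n ℝ) : ℝ :=
  (S * Ω).trace - Real.log Ω.det + γ1 * l1Norm Ω + γ2 * (frobNorm Ω)^2

/-!
The minimiser `Ω*` is a fixed point of the GEN-ISTA map. Testing its optimality along the
symmetric directions `E_ij + E_ji` (resp. `E_ii`) shows that the gradient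
`G* = S̃ - Ω*⁻¹ + 2γ₂Ω*` of the smooth part satisfies `|G*_ij| ≤ γ₁` and
`G*_ij Ω*_ij = -γ₁ |Ω*_ij|`, which is exactly the condition under which soft-thresholding at
level `tγ₁` returns `Ω*_ij`. Since soft-thresholding is entrywise 1-Lipschitz, the error after
one step is at most the Frobenius norm of the difference of the two gradient steps, namely
`m_t Δ - t Ωₖ⁻¹ Δ Ω*⁻¹` with `Δ = Ωₖ - Ω*`. Diagonalising `Ωₖ` and `Ω*` by orthogonal matrices
turns this map into the entrywise multiplication of `Δ` by `m_t - t / (λᵢ μⱼ)`, where the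
eigenvalues `λᵢ, μⱼ` lie in `[a, b]`.
-/

open Filter Topology Finset

noncomputable def softThreshold (τ x : ℝ) : ℝ := Real.sign x * max (|x| - τ) 0

lemma softThreshold_eq_sub_clamp {τ : ℝ} (hτ : 0 ≤ τ) (x : ℝ) :
    softThreshold τ x = x - max (-τ) (min x τ) := by
  unfold softThreshold
  rcases lt_trichotomy x 0 with hx | rfl | hx
  · rw [Real.sign_of_neg hx, abs_of_neg hx]
    rcases le_total x (-τ) with h | h
    · rw [max_eq_left (by linarith), min_eq_left (by linarith), max_eq_left h]; ring
    · rw [max_eq_right (by linarith), min_eq_left (by linarith), max_eq_right h]; ring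
  · simp [hτ]
  · rw [Real.sign_of_pos hx, abs_of_pos hx]
    rcases le_total x τ with h | h
    · rw [max_eq_right (by linarith), min_eq_left h, max_eq_right (by linarith)]; ring
    · rw [max_eq_left (by linarith), min_eq_right h, max_eq_right (by linarith)]; ring

lemma abs_softThreshold_sub_le {τ : ℝ} (hτ : 0 ≤ τ) (x y : ℝ) :
    |softThreshold τ x - softThreshold τ y| ≤ |x - y| := by
  wlog hxy : y ≤ x generalizing x y
  · rw [abs_sub_comm, abs_sub_comm x]; exact this y x (le_of_not_ge hxy)
  have hmono : max (-τ) (min y τ) ≤ max (-τ) (min x τ) := by gcongr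
  have hlip : max (-τ) (min x τ) - max (-τ) (min y τ) ≤ x - y := by
    have hmax := abs_max_sub_max_le_max (-τ) (min x τ) (-τ) (min y τ)
    have hmin := abs_min_sub_min_le_max x τ y τ
    rw [sub_self, abs_zero] at hmax hmin
    calc _ ≤ max 0 |min x τ - min y τ| := (le_abs_self _).trans hmax
      _ ≤ |x - y| := max_le (abs_nonneg _) (hmin.trans (max_le le_rfl (abs_nonneg _)))
      _ = x - y := abs_of_nonneg (sub_nonneg.2 hxy)
  rw [softThreshold_eq_sub_clamp hτ, softThreshold_eq_sub_clamp hτ,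
    abs_of_nonneg (sub_nonneg.2 hxy), abs_le]
  constructor <;> linarith

lemma softThreshold_sub_mul_eq {t γ g x : ℝ} (ht : 0 ≤ t) (hg : |g| ≤ γ)
    (hgx : g * x = -(γ * |x|)) : softThreshold (t * γ) (x - t * g) = x := by
  unfold softThreshold
  rcases lt_trichotomy x 0 with hx | rfl | hx
  · obtain rfl : g = γ := by
      rw [abs_of_neg hx] at hgx
      exact mul_right_cancel₀ hx.ne (by linarith)
    have hγ : 0 ≤ g := (abs_nonneg _).trans hg
    have hneg : x - t * g < 0 := by nlinarith [mul_nonneg ht hγ]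
    rw [Real.sign_of_neg hneg, abs_of_neg hneg, max_eq_left (by linarith)]
    ring
  · have : |0 - t * g| ≤ t * γ := by
      rw [zero_sub, abs_neg, abs_mul, abs_of_nonneg ht]; gcongr
    rw [max_eq_right (sub_nonpos.2 this), mul_zero]
  · obtain rfl : g = -γ := by
      rw [abs_of_pos hx] at hgx
      exact mul_right_cancel₀ hx.ne' (by linarith)
    have hγ : 0 ≤ γ := (abs_nonneg _).trans hg
    have hpos : 0 < x - t * -γ := by nlinarith
    rw [Real.sign_of_pos hpos, abs_of_pos hpos, max_eq_left (by nlinarith)]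
    ring

lemma abs_sub_mul_inv_mul_inv_le {a b c d x y : ℝ} (ha : 0 < a) (hd : 0 ≤ d)
    (hx : x ∈ Set.Icc a b) (hy : y ∈ Set.Icc a b) :
    |c - d * (x⁻¹ * y⁻¹)| ≤ max |c - d / a ^ 2| |c - d / b ^ 2| := by
  have hx0 : 0 < x := ha.trans_le hx.1
  have hy0 : 0 < y := ha.trans_le hy.1
  have hb0 : 0 < b := hx0.trans_le hx.2
  have hlow : d / b ^ 2 ≤ d * (x⁻¹ * y⁻¹) := by
    rw [div_eq_mul_inv, sq, mul_inv]
    gcongr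
    exacts [hx.2, hy.2]
  have hup : d * (x⁻¹ * y⁻¹) ≤ d / a ^ 2 := by
    rw [div_eq_mul_inv, sq, mul_inv]
    gcongr
    exacts [hx.1, hy.1]
  rw [abs_le]
  constructor
  · linarith [neg_abs_le (c - d / a ^ 2), le_max_left |c - d / a ^ 2| |c - d / b ^ 2|]
  · linarith [le_abs_self (c - d / b ^ 2), le_max_right |c - d / a ^ 2| |c - d / b ^ 2|]

lemma abs_le_of_hasDerivAt_of_isLocalMin_add_abs {φ : ℝ → ℝ} {φ' C : ℝ}
    (hφ : HasDerivAt φ φ' 0) (hmin : IsLocalMin (fun ε => φ ε + C * |ε|) 0) : |φ'| ≤ C := by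
  rw [abs_le]
  constructor
  · refine ge_of_tendsto hφ.tendsto_slope_zero_right ?_
    filter_upwards [nhdsWithin_le_nhds hmin, self_mem_nhdsWithin] with ε hε (hε0 : 0 < ε)
    rw [abs_zero, mul_zero, add_zero, abs_of_pos hε0] at hε
    rw [zero_add, smul_eq_mul, inv_mul_eq_div, le_div_iff₀ hε0]
    linarith
  · refine le_of_tendsto hφ.tendsto_slope_zero_left ?_
    filter_upwards [nhdsWithin_le_nhds hmin, self_mem_nhdsWithin] with ε hε (hε0 : ε < 0)
    rw [abs_zero, mul_zero, add_zero, abs_of_neg hε0] at hε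
    rw [zero_add, smul_eq_mul, inv_mul_eq_div, div_le_iff_of_neg hε0]
    linarith

lemma subgradient_of_isLocalMin_add_abs {φ : ℝ → ℝ} {φ' C x : ℝ} (hC : 0 ≤ C)
    (hφ : HasDerivAt φ φ' 0) (hmin : IsLocalMin (fun ε => φ ε + C * |x + ε|) 0) :
    |φ'| ≤ C ∧ φ' * x = -(C * |x|) := by
  constructor
  · refine abs_le_of_hasDerivAt_of_isLocalMin_add_abs hφ ?_
    filter_upwards [hmin] with ε hε
    have := mul_le_mul_of_nonneg_left (abs_add_le x ε) hC
    simp only [add_zero, abs_zero, mul_zero] at hε ⊢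
    linarith
  · have hline : IsLocalMin (fun s => φ (s * x) + C * |x| * (1 + s)) 0 := by
      -- along `ε = s * x` the kink of `|x + ε|` disappears: `|x + s * x| = |x| * (1 + s)`
      have hcomp : IsLocalMin ((fun ε => φ ε + C * |x + ε|) ∘ fun s => s * x) 0 :=
        IsLocalMin.comp_continuous (by rwa [zero_mul]) (continuous_mul_const x).continuousAt
      refine hcomp.congr ?_
      filter_upwards [Ioo_mem_nhds (show (-1 : ℝ) < 0 by norm_num) one_pos] with s hs
      have : |x + s * x| = |x| * (1 + s) := by
        rw [show x + s * x = x * (1 + s) by ring, abs_mul,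
          abs_of_pos (a := 1 + s) (by linarith [hs.1])]
      simp only [Function.comp_apply, this, mul_assoc]
    have hderiv : HasDerivAt (fun s => φ (s * x) + C * |x| * (1 + s)) (φ' * x + C * |x|) 0 := by
      have hx : HasDerivAt (fun s : ℝ => s * x) x 0 := by
        simpa using (hasDerivAt_id (0 : ℝ)).mul_const x
      have h1 := HasDerivAt.comp_of_eq 0 hφ hx (zero_mul x).symm
      have h2 : HasDerivAt (fun s : ℝ => C * |x| * (1 + s)) (C * |x|) 0 := by
        simpa using ((hasDerivAt_id (0:ℝ)).const_add 1).const_mul (C * |x|)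
      exact h1.add h2
    linarith [hline.hasDerivAt_eq_zero hderiv]

section

variable {n : Type*}

lemma eq_of_sym2_eq_of_isHermitian {A : Matrix n n ℝ} (hA : A.IsHermitian) {i j k l : n}
    (h : s(k, l) = s(i, j)) : A k l = A i j := by
  rcases Sym2.eq_iff.1 h with ⟨rfl, rfl⟩ | ⟨rfl, rfl⟩
  · rfl
  · simpa using (hA.apply k l).symm

section

variable [DecidableEq n]

def symmIndicator (i j : n) : Matrix n n ℝ :=
  of fun k l => if s(k, l) = s(i, j) then 1 else 0

lemma symmIndicator_isHermitian (i j : n) : (symmIndicator i j).IsHermitian := by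
  ext k l
  simp only [conjTranspose_apply, symmIndicator, of_apply, star_trivial, Sym2.eq_swap]

end

section

variable [Fintype n]

lemma frobNorm_nonneg (A : Matrix n n ℝ) : 0 ≤ frobNorm A := Real.sqrt_nonneg _

lemma frobNorm_sq (A : Matrix n n ℝ) : frobNorm A ^ 2 = ∑ i, ∑ j, A i j ^ 2 :=
  Real.sq_sqrt (by positivity)

lemma frobNorm_le_mul_of_abs_le {A B : Matrix n n ℝ} {K : ℝ} (hK : 0 ≤ K)
    (h : ∀ i j, |A i j| ≤ K * |B i j|) : frobNorm A ≤ K * frobNorm B := by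
  rw [frobNorm, frobNorm, ← Real.sqrt_sq hK, ← Real.sqrt_mul (sq_nonneg K), Finset.mul_sum]
  gcongr with i _
  rw [Finset.mul_sum]
  gcongr with j _
  rw [← sq_abs, ← sq_abs (B i j), ← mul_pow]
  exact pow_le_pow_left₀ (abs_nonneg _) (h i j) 2

lemma frobNorm_Sft_sub_Sft_le {τ : ℝ} (hτ : 0 ≤ τ) (A B : Matrix n n ℝ) :
    frobNorm (Sft A τ - Sft B τ) ≤ frobNorm (A - B) := by
  have h := frobNorm_le_mul_of_abs_le (A := Sft A τ - Sft B τ) (B := A - B) zero_le_one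
    fun i j => by rw [one_mul]; exact abs_softThreshold_sub_le hτ (A i j) (B i j)
  rwa [one_mul] at h

lemma frobNorm_sq_eq_trace (A : Matrix n n ℝ) : frobNorm A ^ 2 = (star A * A).trace := by
  rw [frobNorm_sq, trace, Finset.sum_comm]
  simp [mul_apply, sq]

lemma hasDerivAt_frobNorm_sq_add_smul (Ω D : Matrix n n ℝ) :
    HasDerivAt (fun ε : ℝ => frobNorm (Ω + ε • D) ^ 2) (2 * (Ωᵀ * D).trace) 0 := by
  have hentry (k l : n) :
      HasDerivAt (fun ε : ℝ => (Ω k l + ε * D k l) ^ 2) (2 * (Ω k l * D k l)) 0 := by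
    simpa [mul_assoc] using (((hasDerivAt_id (0:ℝ)).mul_const (D k l)).const_add (Ω k l)).fun_pow 2
  have hsum := HasDerivAt.fun_sum (u := Finset.univ) fun k _ =>
    HasDerivAt.fun_sum (u := Finset.univ) fun l _ => hentry k l
  simp only [frobNorm_sq, Matrix.add_apply, Matrix.smul_apply, smul_eq_mul]
  refine hsum.congr_deriv ?_
  simp only [trace, Matrix.diag, mul_apply, transpose_apply, ← Finset.mul_sum]
  rw [Finset.sum_comm]

lemma abs_dotProduct_mulVec_le (D : Matrix n n ℝ) (x : n → ℝ) :
    |x ⬝ᵥ (D *ᵥ x)| ≤ l1Norm D * (x ⬝ᵥ x) := by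
  have hsq (k : n) : x k ^ 2 ≤ x ⬝ᵥ x := by
    simpa [dotProduct, sq] using
      Finset.single_le_sum (f := fun l => x l * x l) (fun l _ => mul_self_nonneg _) (mem_univ k)
  have hprod (k l : n) : |x k * x l| ≤ x ⬝ᵥ x := by
    nlinarith [abs_mul_abs_self (x k), abs_mul_abs_self (x l), abs_mul (x k) (x l),
      two_mul_le_add_sq |x k| |x l|, hsq k, hsq l]
  calc |x ⬝ᵥ (D *ᵥ x)| = |∑ k, ∑ l, D k l * (x k * x l)| := by
        simp only [dotProduct, mulVec, Finset.mul_sum]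
        congr 1
        refine Finset.sum_congr rfl fun k _ => Finset.sum_congr rfl fun l _ => ?_
        ring
    _ ≤ ∑ k, ∑ l, |D k l| * (x ⬝ᵥ x) := by
        refine (abs_sum_le_sum_abs _ _).trans (sum_le_sum fun k _ => ?_)
        refine (abs_sum_le_sum_abs _ _).trans (sum_le_sum fun l _ => ?_)
        rw [abs_mul]
        exact mul_le_mul_of_nonneg_left (hprod k l) (abs_nonneg _)
    _ = l1Norm D * (x ⬝ᵥ x) := by simp only [l1Norm, Finset.sum_mul]

section

variable [DecidableEq n]

lemma frobNorm_unitary_mul {U : Matrix n n ℝ} (hU : U ∈ unitaryGroup n ℝ) (A : Matrix n n ℝ) :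
    frobNorm (U * A) = frobNorm A := by
  rw [← sq_eq_sq₀ (frobNorm_nonneg _) (frobNorm_nonneg _), frobNorm_sq_eq_trace,
    frobNorm_sq_eq_trace, star_mul, mul_assoc, ← mul_assoc (star U),
    Unitary.star_mul_self_of_mem hU, one_mul]

lemma frobNorm_mul_unitary {U : Matrix n n ℝ} (hU : U ∈ unitaryGroup n ℝ) (A : Matrix n n ℝ) :
    frobNorm (A * U) = frobNorm A := by
  rw [← sq_eq_sq₀ (frobNorm_nonneg _) (frobNorm_nonneg _), frobNorm_sq_eq_trace,
    frobNorm_sq_eq_trace, star_mul, mul_assoc, trace_mul_comm, mul_assoc, mul_assoc,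
    Unitary.mul_star_self_of_mem hU, mul_one]

lemma Matrix.IsHermitian.exists_unitary_eq_mul_diagonal_mul_star {A : Matrix n n ℝ}
    (hA : A.IsHermitian) : ∃ U ∈ unitaryGroup n ℝ, A = U * diagonal hA.eigenvalues * star U :=
  ⟨_, hA.eigenvectorUnitary.2, by simpa [Unitary.conjStarAlgAut_apply] using hA.spectral_theorem⟩

lemma frobNorm_smul_sub_smul_mul_mul_le {A B : Matrix n n ℝ} (hA : A.IsHermitian)
    (hB : B.IsHermitian) {c d K : ℝ} (hK : 0 ≤ K)
    (h : ∀ i j, |c - d * (hA.eigenvalues i * hB.eigenvalues j)| ≤ K) (Δ : Matrix n n ℝ) :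
    frobNorm (c • Δ - d • (A * Δ * B)) ≤ K * frobNorm Δ := by
  obtain ⟨U, hU, hAU⟩ := hA.exists_unitary_eq_mul_diagonal_mul_star
  obtain ⟨V, hV, hBV⟩ := hB.exists_unitary_eq_mul_diagonal_mul_star
  have cancelU (X : Matrix n n ℝ) : star U * (U * X) = X := by
    rw [← mul_assoc, Unitary.star_mul_self_of_mem hU, one_mul]
  have cancelV (X : Matrix n n ℝ) : star V * (V * X) = X := by
    rw [← mul_assoc, Unitary.star_mul_self_of_mem hV, one_mul]
  set Δ' := star U * Δ * V
  have hΔ : Δ = U * Δ' * star V := by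
    rw [show U * Δ' * star V = U * star U * Δ * (V * star V) by simp only [Δ', mul_assoc],
      Unitary.mul_star_self_of_mem hU, Unitary.mul_star_self_of_mem hV, one_mul, mul_one]
  have key : c • Δ - d • (A * Δ * B) =
      U * (c • Δ' - d • (diagonal hA.eigenvalues * Δ' * diagonal hB.eigenvalues)) * star V := by
    conv_lhs => rw [hAU, hBV, hΔ]
    simp only [mul_assoc, cancelU, cancelV, mul_sub, sub_mul, Matrix.mul_smul, Matrix.smul_mul]
  rw [key, frobNorm_mul_unitary (Unitary.star_mem hV), frobNorm_unitary_mul hU, hΔ,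
    frobNorm_mul_unitary (Unitary.star_mem hV), frobNorm_unitary_mul hU]
  refine frobNorm_le_mul_of_abs_le hK fun i j => ?_
  have hentry : (c • Δ' - d • (diagonal hA.eigenvalues * Δ' * diagonal hB.eigenvalues)) i j =
      (c - d * (hA.eigenvalues i * hB.eigenvalues j)) * Δ' i j := by
    simp only [Matrix.sub_apply, Matrix.smul_apply, mul_diagonal, diagonal_mul, smul_eq_mul]
    ring
  rw [hentry, abs_mul]
  exact mul_le_mul_of_nonneg_right (h i j) (abs_nonneg _)

lemma le_of_smul_one_loewnerLE_of_mulVec_eq {A : Matrix n n ℝ} {a μ : ℝ} {v : n → ℝ}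
    (hA : loewnerLE (a • 1) A) (hv : A *ᵥ v = μ • v) (hv0 : v ≠ 0) : a ≤ μ := by
  have h := hA.dotProduct_mulVec_nonneg v
  rw [sub_mulVec, hv, smul_mulVec, one_mulVec, dotProduct_sub, dotProduct_smul, dotProduct_smul,
    smul_eq_mul, smul_eq_mul, ← sub_mul] at h
  exact sub_nonneg.1 (nonneg_of_mul_nonneg_left h (dotProduct_star_self_pos_iff.2 hv0))

lemma le_of_loewnerLE_smul_one_of_mulVec_eq {A : Matrix n n ℝ} {b μ : ℝ} {v : n → ℝ}
    (hA : loewnerLE A (b • 1)) (hv : A *ᵥ v = μ • v) (hv0 : v ≠ 0) : μ ≤ b := by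
  have h := hA.dotProduct_mulVec_nonneg v
  rw [sub_mulVec, hv, smul_mulVec, one_mulVec, dotProduct_sub, dotProduct_smul, dotProduct_smul,
    smul_eq_mul, smul_eq_mul, ← sub_mul] at h
  exact sub_nonneg.1 (nonneg_of_mul_nonneg_left h (dotProduct_star_self_pos_iff.2 hv0))

lemma inv_eigenvalues_inv_mem_Icc {A : Matrix n n ℝ} (hA : A.PosDef) {a b : ℝ}
    (haA : loewnerLE (a • 1) A) (hAb : loewnerLE A (b • 1)) (i : n) :
    (hA.inv.isHermitian.eigenvalues i)⁻¹ ∈ Set.Icc a b := by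
  set ν := hA.inv.isHermitian.eigenvalues i
  set v : n → ℝ := ⇑(hA.inv.isHermitian.eigenvectorBasis i)
  have hv0 : v ≠ 0 := by
    simpa [v] using hA.inv.isHermitian.eigenvectorBasis.orthonormal.ne_zero i
  have hv : A⁻¹ *ᵥ v = ν • v := hA.inv.isHermitian.mulVec_eigenvectorBasis i
  have hAA (w : n → ℝ) : A *ᵥ (A⁻¹ *ᵥ w) = w := by
    rw [mulVec_mulVec, mul_nonsing_inv _ hA.det_pos.ne'.isUnit, one_mulVec]
  have hν : ν ≠ 0 := by
    rintro hν
    apply hv0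
    rw [← hAA v, hv, hν, zero_smul, mulVec_zero]
  have hAv : A *ᵥ v = ν⁻¹ • v := by
    conv_rhs => rw [← hAA v, hv, mulVec_smul, smul_smul, inv_mul_cancel₀ hν, one_smul]
  exact ⟨le_of_smul_one_loewnerLE_of_mulVec_eq haA hAv hv0,
    le_of_loewnerLE_smul_one_of_mulVec_eq hAb hAv hv0⟩

lemma frobNorm_smul_sub_smul_inv_mul_mul_inv_le {A B : Matrix n n ℝ} (hA : A.PosDef)
    (hB : B.PosDef) {a b c d : ℝ} (ha : 0 < a) (hd : 0 ≤ d)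
    (haA : loewnerLE (a • 1) A) (hAb : loewnerLE A (b • 1))
    (haB : loewnerLE (a • 1) B) (hBb : loewnerLE B (b • 1)) (Δ : Matrix n n ℝ) :
    frobNorm (c • Δ - d • (A⁻¹ * Δ * B⁻¹)) ≤ max |c - d / a ^ 2| |c - d / b ^ 2| * frobNorm Δ :=
  frobNorm_smul_sub_smul_mul_mul_le hA.inv.isHermitian hB.inv.isHermitian
    ((abs_nonneg _).trans (le_max_left _ _)) (fun i j => by
      simpa using abs_sub_mul_inv_mul_inv_le (c := c) ha hd
        (inv_eigenvalues_inv_mem_Icc hA haA hAb i) (inv_eigenvalues_inv_mem_Icc hB haB hBb j)) Δ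

lemma gradientStep_sub_gradientStep {A B : Matrix n n ℝ} (hA : IsUnit A.det) (hB : IsUnit B.det)
    (S : Matrix n n ℝ) (γ2 t : ℝ) :
    (A - t • (S - A⁻¹ + (2 * γ2) • A)) - (B - t • (S - B⁻¹ + (2 * γ2) • B)) =
      (1 - 2 * t * γ2) • (A - B) - t • (A⁻¹ * (A - B) * B⁻¹) := by
  rw [mul_sub, sub_mul, nonsing_inv_mul A hA, one_mul, Matrix.mul_assoc, mul_nonsing_inv B hB,
    mul_one]
  module

lemma hasDerivAt_det_one_add_smul (M : Matrix n n ℝ) :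
    HasDerivAt (fun ε : ℝ => (1 + ε • M).det) M.trace 0 := by
  have hpoly (ε : ℝ) : (1 + ε • M).det =
      (det (1 + (Polynomial.X : Polynomial ℝ) • M.map Polynomial.C)).eval ε := by
    simp [eval_det, ← smul_eq_mul_diagonal]
  simp only [hpoly]
  have h := (det (1 + (Polynomial.X : Polynomial ℝ) • M.map Polynomial.C)).hasDerivAt 0
  rwa [derivative_det_one_add_X_smul] at h

lemma hasDerivAt_log_det_add_smul {Ω : Matrix n n ℝ} (hΩ : IsUnit Ω.det) (D : Matrix n n ℝ) :
    HasDerivAt (fun ε : ℝ => Real.log (Ω + ε • D).det) (Ω⁻¹ * D).trace 0 := by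
  have hfac (ε : ℝ) : (Ω + ε • D).det = Ω.det * (1 + ε • (Ω⁻¹ * D)).det := by
    rw [← det_mul, mul_add, mul_one, mul_smul_comm, ← mul_assoc, mul_nonsing_inv _ hΩ, one_mul]
  simp only [hfac]
  have := ((hasDerivAt_det_one_add_smul (Ω⁻¹ * D)).const_mul Ω.det).log (by simpa using hΩ.ne_zero)
  simpa [hΩ.ne_zero] using this

lemma genObj_eq_genObj_zero_add (S : Matrix n n ℝ) (γ1 γ2 : ℝ) (M : Matrix n n ℝ) :
    genObj S γ1 γ2 M = genObj S 0 γ2 M + γ1 * l1Norm M := by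
  simp only [genObj]
  ring

lemma hasDerivAt_genObj_zero_add_smul (S : Matrix n n ℝ) {Ω : Matrix n n ℝ} (hΩ : IsUnit Ω.det)
    (γ2 : ℝ) (D : Matrix n n ℝ) :
    HasDerivAt (fun ε : ℝ => genObj S 0 γ2 (Ω + ε • D))
      ((S - Ω⁻¹ + (2 * γ2) • Ωᵀ) * D).trace 0 := by
  have htr : HasDerivAt (fun ε : ℝ => (S * (Ω + ε • D)).trace) (S * D).trace 0 := by
    simp only [mul_add, trace_add, Matrix.mul_smul, trace_smul, smul_eq_mul]
    simpa using ((hasDerivAt_id (0 : ℝ)).mul_const (S * D).trace).const_add (S * Ω).trace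
  have h := (htr.fun_sub (hasDerivAt_log_det_add_smul hΩ D)).fun_add
    ((hasDerivAt_frobNorm_sq_add_smul Ω D).const_mul γ2)
  simp only [genObj, zero_mul, add_zero]
  refine h.congr_deriv ?_
  simp only [add_mul, sub_mul, trace_add, trace_sub, Matrix.smul_mul, trace_smul, smul_eq_mul]
  ring

def symmIndicatorCard (i j : n) : ℕ := #{q : n × n | s(q.1, q.2) = s(i, j)}

lemma symmIndicatorCard_pos (i j : n) : 0 < symmIndicatorCard i j :=
  card_pos.2 ⟨(i, j), by simp⟩

lemma sum_sum_ite_sym2_eq {f : n → n → ℝ} {i j : n}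
    (hf : ∀ k l, s(k, l) = s(i, j) → f k l = f i j) :
    ∑ k, ∑ l, (if s(k, l) = s(i, j) then f k l else 0) = symmIndicatorCard i j * f i j := by
  rw [← Fintype.sum_prod_type' (f := fun k l => if s(k, l) = s(i, j) then f k l else 0),
    Finset.sum_ite, sum_const_zero, add_zero,
    Finset.sum_congr rfl fun q hq => hf q.1 q.2 (Finset.mem_filter.1 hq).2, sum_const,
    nsmul_eq_mul, symmIndicatorCard]

lemma trace_mul_symmIndicator {G : Matrix n n ℝ} (hG : G.IsHermitian) (i j : n) :
    (G * symmIndicator i j).trace = symmIndicatorCard i j * G i j := by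
  rw [← sum_sum_ite_sym2_eq fun k l => eq_of_sym2_eq_of_isHermitian hG]
  refine Finset.sum_congr rfl fun k _ => Finset.sum_congr rfl fun l _ => ?_
  simp only [symmIndicator, of_apply, mul_ite, mul_one, mul_zero, Sym2.eq_swap]

lemma l1Norm_add_smul_symmIndicator {Ω : Matrix n n ℝ} (hΩ : Ω.IsHermitian) (i j : n) (ε : ℝ) :
    l1Norm (Ω + ε • symmIndicator i j) =
      l1Norm Ω + symmIndicatorCard i j * (|Ω i j + ε| - |Ω i j|) := by
  rw [← sum_sum_ite_sym2_eq (f := fun k l => |Ω k l + ε| - |Ω k l|) fun k l h => by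
    simp only [eq_of_sym2_eq_of_isHermitian hΩ h]]
  simp only [l1Norm, ← Finset.sum_add_distrib]
  refine Finset.sum_congr rfl fun k _ => Finset.sum_congr rfl fun l _ => ?_
  split_ifs with h
  · simp only [Matrix.add_apply, Matrix.smul_apply, symmIndicator, of_apply, h, if_true,
      smul_eq_mul, mul_one]
    ring
  · simp only [Matrix.add_apply, Matrix.smul_apply, symmIndicator, of_apply, h, if_false,
      smul_eq_mul, mul_zero, add_zero]

lemma eventually_posDef_add_smul {Ω D : Matrix n n ℝ} {a : ℝ} (ha : 0 < a)
    (hΩ : Ω.IsHermitian) (haΩ : loewnerLE (a • 1) Ω) (hD : D.IsHermitian) :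
    ∀ᶠ ε in 𝓝 (0 : ℝ), (Ω + ε • D).PosDef := by
  have hsmall : Tendsto (fun ε : ℝ => |ε| * l1Norm D) (𝓝 0) (𝓝 0) := by
    have : Continuous fun ε : ℝ => |ε| * l1Norm D := by fun_prop
    simpa using this.tendsto 0
  filter_upwards [hsmall.eventually (gt_mem_nhds ha)] with ε hε
  refine PosDef.of_dotProduct_mulVec_pos (hΩ.add (hD.smul (IsSelfAdjoint.all ε))) fun x hx => ?_
  have hx2 : 0 < x ⬝ᵥ x := by simpa using dotProduct_star_self_pos_iff.2 hx
  have hΩx : a * (x ⬝ᵥ x) ≤ x ⬝ᵥ (Ω *ᵥ x) := by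
    have h := haΩ.dotProduct_mulVec_nonneg x
    rw [star_trivial, sub_mulVec, smul_mulVec, one_mulVec, dotProduct_sub, dotProduct_smul,
      smul_eq_mul] at h
    linarith
  have hDx : |ε * (x ⬝ᵥ (D *ᵥ x))| ≤ |ε| * l1Norm D * (x ⬝ᵥ x) := by
    rw [abs_mul, mul_assoc]
    exact mul_le_mul_of_nonneg_left (abs_dotProduct_mulVec_le D x) (abs_nonneg ε)
  rw [star_trivial, add_mulVec, smul_mulVec, dotProduct_add, dotProduct_smul, smul_eq_mul]
  nlinarith [neg_abs_le (ε * (x ⬝ᵥ (D *ᵥ x)))]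

theorem genObj_minimizer_subgradient {S Ω : Matrix n n ℝ} (hS : S.IsHermitian) {γ1 γ2 a : ℝ}
    (hγ1 : 0 ≤ γ1) (hΩ : Ω.PosDef) (ha : 0 < a) (haΩ : loewnerLE (a • 1) Ω)
    (hmin : ∀ M : Matrix n n ℝ, M.PosDef → genObj S γ1 γ2 Ω ≤ genObj S γ1 γ2 M) (i j : n) :
    |(S - Ω⁻¹ + (2 * γ2) • Ω) i j| ≤ γ1 ∧
      (S - Ω⁻¹ + (2 * γ2) • Ω) i j * Ω i j = -(γ1 * |Ω i j|) := by
  set G := S - Ω⁻¹ + (2 * γ2) • Ω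
  have hc : (0 : ℝ) < symmIndicatorCard i j := Nat.cast_pos.2 (symmIndicatorCard_pos i j)
  have hderiv : HasDerivAt (fun ε : ℝ => genObj S 0 γ2 (Ω + ε • symmIndicator i j))
      (symmIndicatorCard i j * G i j) 0 := by
    have hG : G.IsHermitian :=
      (hS.sub hΩ.inv.isHermitian).add (hΩ.isHermitian.smul (IsSelfAdjoint.all _))
    have := hasDerivAt_genObj_zero_add_smul S hΩ.det_pos.ne'.isUnit γ2 (symmIndicator i j)
    have hΩT : Ωᵀ = Ω := by rw [← conjTranspose_eq_transpose_of_trivial, hΩ.isHermitian.eq]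
    rwa [hΩT, trace_mul_symmIndicator hG] at this
  have hloc : IsLocalMin (fun ε : ℝ => genObj S 0 γ2 (Ω + ε • symmIndicator i j) +
      symmIndicatorCard i j * γ1 * |Ω i j + ε|) 0 := by
    filter_upwards
      [eventually_posDef_add_smul ha hΩ.isHermitian haΩ (symmIndicator_isHermitian i j)] with ε hε
    have h := hmin _ hε
    rw [genObj_eq_genObj_zero_add S γ1 γ2 Ω, genObj_eq_genObj_zero_add S γ1 γ2 (Ω + _),
      l1Norm_add_smul_symmIndicator hΩ.isHermitian] at h
    simp only [zero_smul, add_zero]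
    linarith
  obtain ⟨hbound, hcompl⟩ := subgradient_of_isLocalMin_add_abs (by positivity) hderiv hloc
  rw [abs_mul, abs_of_pos hc] at hbound
  exact ⟨le_of_mul_le_mul_left hbound hc, mul_left_cancel₀ hc.ne' (by linear_combination hcompl)⟩

end

end

end

theorem stmt4_general {p : ℕ}
    (S : Matrix (Fin p) (Fin p) ℝ) (hS : S.IsHermitian)
    (γ1 γ2 : ℝ) (hγ1 : 0 < γ1)
    (a b : ℝ) (ha : 0 < a)
    (Ωstar : Matrix (Fin p) (Fin p) ℝ) (hΩstar : Ωstar.PosDef)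
    (hmin : ∀ M : Matrix (Fin p) (Fin p) ℝ, M.PosDef →
      genObj S γ1 γ2 Ωstar ≤ genObj S γ1 γ2 M)
    (hs1 : loewnerLE (a • (1 : Matrix (Fin p) (Fin p) ℝ)) Ωstar)
    (hs2 : loewnerLE Ωstar (b • (1 : Matrix (Fin p) (Fin p) ℝ)))
    (Ωk : Matrix (Fin p) (Fin p) ℝ) (hΩk : Ωk.PosDef)
    (hk1 : loewnerLE (a • (1 : Matrix (Fin p) (Fin p) ℝ)) Ωk)
    (hk2 : loewnerLE Ωk (b • (1 : Matrix (Fin p) (Fin p) ℝ)))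
    (t : ℝ) (ht0 : 0 < t)
    (mt : ℝ) (hmt : mt = 1 - 2*t*γ2) :
    frobNorm (Sft (Ωk - t • (S - Ωk⁻¹ + (2*γ2) • Ωk)) (t*γ1) - Ωstar) ≤
      max |mt - t/a^2| |mt - t/b^2| * frobNorm (Ωk - Ωstar) := by
  have hfix : Sft (Ωstar - t • (S - Ωstar⁻¹ + (2*γ2) • Ωstar)) (t*γ1) = Ωstar := by
    ext i j
    obtain ⟨hbound, hcompl⟩ := genObj_minimizer_subgradient hS hγ1.le hΩstar ha hs1 hmin i j
    exact softThreshold_sub_mul_eq ht0.le hbound hcompl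
  calc frobNorm (Sft (Ωk - t • (S - Ωk⁻¹ + (2*γ2) • Ωk)) (t*γ1) - Ωstar)
      ≤ frobNorm ((Ωk - t • (S - Ωk⁻¹ + (2*γ2) • Ωk)) -
          (Ωstar - t • (S - Ωstar⁻¹ + (2*γ2) • Ωstar))) := by
        conv_lhs => rw [← hfix]
        exact frobNorm_Sft_sub_Sft_le (by positivity) _ _
    _ = frobNorm (mt • (Ωk - Ωstar) - t • (Ωk⁻¹ * (Ωk - Ωstar) * Ωstar⁻¹)) := by
        rw [gradientStep_sub_gradientStep hΩk.det_pos.ne'.isUnit hΩstar.det_pos.ne'.isUnit, hmt]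
    _ ≤ max |mt - t/a^2| |mt - t/b^2| * frobNorm (Ωk - Ωstar) :=
        frobNorm_smul_sub_smul_inv_mul_mul_inv_le hΩk hΩstar ha ht0.le hk1 hk2 hs1 hs2 _

/-- one-step contraction bound for the GEN-ISTA update. -/
theorem stmt4 {p : ℕ} (hp : 0 < p)
    (S : Matrix (Fin p) (Fin p) ℝ) (hS : S.IsHermitian)
    (γ1 γ2 : ℝ) (hγ1 : 0 < γ1) (hγ2 : 0 < γ2)
    (a b : ℝ) (ha : 0 < a) (hab : a < b)
    (Ωstar : Matrix (Fin p) (Fin p) ℝ) (hΩstar : Ωstar.PosDef)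
    (hmin : ∀ M : Matrix (Fin p) (Fin p) ℝ, M.PosDef →
      genObj S γ1 γ2 Ωstar ≤ genObj S γ1 γ2 M)
    (hs1 : loewnerLE (a • (1 : Matrix (Fin p) (Fin p) ℝ)) Ωstar)
    (hs2 : loewnerLE Ωstar (b • (1 : Matrix (Fin p) (Fin p) ℝ)))
    (Ωk : Matrix (Fin p) (Fin p) ℝ) (hΩk : Ωk.PosDef)
    (hk1 : loewnerLE (a • (1 : Matrix (Fin p) (Fin p) ℝ)) Ωk)
    (hk2 : loewnerLE Ωk (b • (1 : Matrix (Fin p) (Fin p) ℝ)))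
    (t : ℝ) (ht0 : 0 < t) (ht : t ≤ a^2 / (2*a^2*γ2 + 1))
    (mt : ℝ) (hmt : mt = 1 - 2*t*γ2) :
    frobNorm (Sft (Ωk - t • (S - Ωk⁻¹ + (2*γ2) • Ωk)) (t*γ1) - Ωstar) ≤
      max |mt - t/a^2| |mt - t/b^2| * frobNorm (Ωk - Ωstar) :=
  stmt4_general S hS γ1 γ2 hγ1 a b ha Ωstar hΩstar hmin hs1 hs2 Ωk hΩk hk1 hk2 t ht0 mt hmt
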